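/- arXiv:2208.06897 — 2 statements merged into one kernel-verified Lean document; each statement's English description precedes it below -/
import Mathlib

section
/- The function v(x₁, x₂) = x₁^{4/3} − x₂^{4/3} is ∞-harmonic away from the coordinate axes: it satisfies Δ_∞ v = Σ_{i,j} ∂_i v · ∂_j v · ∂_{ij} v = 0 at every point (x₁, x₂) with x₁ > 0 and x₂ > 0. -/
/-!
The Aronsson function is separable, `v x₁ x₂ = f x₁ - f x₂` with `f t = t ^ (4/3)`, so the mixed
term of the ∞-Laplacian vanishes and `Δ_∞ v = (f'² f'')(x₁) - (f'² f'')(x₂)`. For `f t = t ^ p` one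
has `f'² f'' = p³ (p - 1) t ^ (3p - 4)`, which is constant exactly when `p = 4/3`.
-/

open Real

/-- Partial derivatives are iterated one-variable `deriv`s; `∂₁₂v` is `∂₂` of `∂₁v`. -/
noncomputable def infLaplacian (v : ℝ → ℝ → ℝ) (x₁ x₂ : ℝ) : ℝ :=
  deriv (fun t => v t x₂) x₁ ^ 2 * deriv (deriv fun t => v t x₂) x₁
    + 2 * deriv (fun t => v t x₂) x₁ * deriv (fun t => v x₁ t) x₂
      * deriv (fun t => deriv (fun s => v s t) x₁) x₂
    + deriv (fun t => v x₁ t) x₂ ^ 2 * deriv (deriv fun t => v x₁ t) x₂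

theorem infLaplacian_sub (f g : ℝ → ℝ) (x₁ x₂ : ℝ) :
    infLaplacian (fun a b => f a - g b) x₁ x₂
      = deriv f x₁ ^ 2 * deriv (deriv f) x₁ - deriv g x₂ ^ 2 * deriv (deriv g) x₂ := by
  simp only [infLaplacian, deriv_sub_const_fun, deriv_const_sub', deriv_const_sub, deriv_const,
    deriv.fun_neg]
  ring

theorem Real.deriv_deriv_rpow_const (x p : ℝ) :
    deriv (deriv fun t : ℝ => t ^ p) x = p * (p - 1) * x ^ (p - 2) := by
  rw [deriv_rpow_const', deriv_const_mul_field, deriv_rpow_const]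
  ring_nf

theorem Real.deriv_sq_mul_deriv_deriv_rpow_const {x : ℝ} (hx : 0 < x) (p : ℝ) :
    deriv (fun t : ℝ => t ^ p) x ^ 2 * deriv (deriv fun t : ℝ => t ^ p) x
      = p ^ 3 * (p - 1) * x ^ (3 * p - 4) := by
  rw [deriv_rpow_const, deriv_deriv_rpow_const,
    show 3 * p - 4 = (p - 1) + (p - 1) + (p - 2) by ring, rpow_add hx, rpow_add hx]
  ring

/-- The Aronsson function `v(x₁,x₂) = x₁^(4/3) − x₂^(4/3)` is ∞-harmonic in the open
    first quadrant: `(∂₁v)²∂₁₁v + 2(∂₁v)(∂₂v)∂₁₂v + (∂₂v)²∂₂₂v = 0` for `x₁, x₂ > 0`. -/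
theorem aronsson_infinity_harmonic (x₁ x₂ : ℝ) (h₁ : 0 < x₁) (h₂ : 0 < x₂) :
    let v : ℝ → ℝ → ℝ := fun a b => a ^ ((4 : ℝ) / 3) - b ^ ((4 : ℝ) / 3)
    let d1 := deriv (fun t => v t x₂) x₁
    let d2 := deriv (fun t => v x₁ t) x₂
    let d11 := deriv (deriv (fun t => v t x₂)) x₁
    let d22 := deriv (deriv (fun t => v x₁ t)) x₂
    let d12 := deriv (fun t => deriv (fun s => v s t) x₁) x₂
    d1 ^ 2 * d11 + 2 * d1 * d2 * d12 + d2 ^ 2 * d22 = 0 := by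
  show infLaplacian (fun a b => a ^ ((4 : ℝ) / 3) - b ^ ((4 : ℝ) / 3)) x₁ x₂ = 0
  rw [infLaplacian_sub, deriv_sq_mul_deriv_deriv_rpow_const h₁,
    deriv_sq_mul_deriv_deriv_rpow_const h₂]
  norm_num
end

section
/- On the interval Ω = (0,1) with zero Dirichlet boundary conditions and constant source f = c > 0, the unique minimizer of u ↦ (1/p)∫₀¹|u'|^p dx − ∫₀¹ f·u dx over W₀^{1,p}(0,1) converges uniformly as p → ∞ to the distance function u_∞(x) = min(x, 1−x), independently of the value c > 0. -/
/-!
In the variable `s = 1/(p-1)`, which tends to `0⁺` as `p → ∞`, the solution reads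
`u_p(x) = c^s/(1+s) · ((1/2)^(1+s) - |x - 1/2|^(1+s))`. This expression is jointly continuous in
`(s, x)` for `s ≥ 0`, and at `s = 0` it is `1/2 - |x - 1/2| = min(x, 1-x)`, whatever `c` is.
Joint continuity on `[0, ∞) × [0,1]`, with `[0,1]` compact, makes the convergence as `s → 0⁺`
uniform in `x`.
-/

open Real Filter Set Topology

theorem IsCompact.tendstoUniformlyOn_nhdsWithin_of_continuousOn_prod
    {α β E : Type*} [TopologicalSpace α] [TopologicalSpace β] [UniformSpace E]
    {f : α → β → E} {s : Set α} {k : Set β} {q : α}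
    (hk : IsCompact k) (hf : ContinuousOn ↿f (s ×ˢ k)) (hq : q ∈ s) :
    TendstoUniformlyOn f (f q) (𝓝[s] q) k := fun u hu => by
  obtain ⟨v, hv, hvu⟩ := hk.mem_uniformity_of_prod hf hq (symm_le_uniformity hu)
  exact eventually_of_mem hv hvu

noncomputable def pLaplaceProfile (c s x : ℝ) : ℝ :=
  c ^ s / (1 + s) * ((1 / 2) ^ (1 + s) - |x - 1 / 2| ^ (1 + s))

theorem pLaplaceProfile_one_div_sub_one {p : ℝ} (hp : 1 < p) (c x : ℝ) :
    pLaplaceProfile c (1 / (p - 1)) x =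
      (p - 1) / p * c ^ (1 / (p - 1)) *
        ((1 / 2) ^ (p / (p - 1)) - |x - 1 / 2| ^ (p / (p - 1))) := by
  have hp1 : p - 1 ≠ 0 := by linarith
  have hexp : 1 + 1 / (p - 1) = p / (p - 1) := by field_simp; ring
  rw [pLaplaceProfile, hexp, div_div_eq_mul_div]
  ring

theorem pLaplaceProfile_zero (c : ℝ) : pLaplaceProfile c 0 = fun x => min x (1 - x) := by
  funext x
  simp only [pLaplaceProfile, rpow_zero, add_zero, rpow_one]
  rcases le_total x (1 / 2) with h | h
  · rw [abs_of_nonpos (by linarith), min_eq_left (by linarith)]; ring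
  · rw [abs_of_nonneg (by linarith), min_eq_right (by linarith)]; ring

theorem continuousOn_pLaplaceProfile {c : ℝ} (hc : c ≠ 0) :
    ContinuousOn ↿(pLaplaceProfile c) (Ici 0 ×ˢ univ) := by
  rintro ⟨s, x⟩ ⟨hs, -⟩
  have hexp : 0 < 1 + s := by rw [mem_Ici] at hs; linarith
  apply ContinuousAt.continuousWithinAt
  refine ContinuousAt.mul
    (((continuousAt_const_rpow hc).comp continuousAt_fst).div (by fun_prop) hexp.ne') ?_
  refine ContinuousAt.sub ?_ ?_
  · exact (continuousAt_const_rpow (by norm_num)).comp (by fun_prop)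
  · exact ContinuousAt.rpow (by fun_prop) (by fun_prop) (Or.inr hexp)

theorem tendstoUniformlyOn_pLaplaceProfile {c : ℝ} (hc : c ≠ 0) :
    TendstoUniformlyOn (pLaplaceProfile c) (fun x => min x (1 - x)) (𝓝[≥] 0) (Icc 0 1) := by
  rw [← pLaplaceProfile_zero c]
  exact isCompact_Icc.tendstoUniformlyOn_nhdsWithin_of_continuousOn_prod
    ((continuousOn_pLaplaceProfile hc).mono (prod_mono subset_rfl (subset_univ _))) self_mem_Ici

theorem tendsto_one_div_sub_one_atTop_nhdsGE_zero :
    Tendsto (fun p : ℝ => 1 / (p - 1)) atTop (𝓝[≥] 0) := by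
  simpa only [one_div, Function.comp_def, id, sub_eq_add_neg] using
    (tendsto_inv_atTop_nhdsGT_zero.comp (tendsto_atTop_add_const_right atTop (-1) tendsto_id))
      |>.mono_right (nhdsWithin_mono _ Ioi_subset_Ici_self)

/-- The 1D p-Laplace Dirichlet solutions with constant positive source `c`,
    `u_p(x) = ((p−1)/p)·c^(1/(p−1))·((1/2)^(p/(p−1)) − |x−1/2|^(p/(p−1)))`,
    each being the unique minimizer of `u ↦ (1/p)∫|u'|^p − ∫ c·u` over `W₀^{1,p}(0,1)`,
    converge uniformly on `[0,1]` as `p → ∞` to `u_∞(x) = min(x, 1−x)`,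
    independently of `c > 0`. -/
theorem one_d_p_laplace_limit (c : ℝ) (hc : 0 < c) :
    let u : ℝ → ℝ → ℝ := fun p x =>
      ((p - 1) / p) * c ^ (1 / (p - 1)) *
        ((1 / 2 : ℝ) ^ (p / (p - 1)) - |x - 1 / 2| ^ (p / (p - 1)))
    TendstoUniformlyOn u (fun x => min x (1 - x)) Filter.atTop (Set.Icc (0 : ℝ) 1) := by
  intro u
  have hprofile : TendstoUniformlyOn (fun p => pLaplaceProfile c (1 / (p - 1)))
      (fun x => min x (1 - x)) atTop (Icc 0 1) := fun v hv =>
    tendsto_one_div_sub_one_atTop_nhdsGE_zero.eventually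
      (tendstoUniformlyOn_pLaplaceProfile hc.ne' v hv)
  refine hprofile.congr ?_
  filter_upwards [eventually_gt_atTop 1] with p hp x _
  exact pLaplaceProfile_one_div_sub_one hp c x
end
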